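/- Let n, m be positive integers, α = (α_1, ..., α_m) ∈ ℂ^m with D(α) ≤ 1/2. Then the mn-tuple formed by the points β_{k,ℓ} = α_k^{1/n} ζ_n^ℓ (for 1 ≤ k ≤ m, 1 ≤ ℓ ≤ n, and any fixed choice of n-th roots α_k^{1/n}) satisfies D((β_{k,ℓ})) ≤ (2/n) D(α). -/

import Mathlib

/-- `ζ_d = exp(2πi/d)`. -/
noncomputable def zetad (d : ℕ) : ℂ := Complex.exp (2 * Real.pi * Complex.I / d)

/-- The finite discrepancy `D(ξ) = inf_{|u|=1} max_j min_i |ξ_i − u ζ_d^j|`. -/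
noncomputable def Disc {d : ℕ} (ξ : Fin d → ℂ) : ℝ :=
  sInf {t : ℝ | ∃ u : ℂ, ‖u‖ = 1 ∧
    t = ⨆ j : Fin d, ⨅ i : Fin d, ‖ξ i - u * zetad d ^ ((j : ℕ) + 1)‖}

/-!
Take `u` on the unit circle attaining `D(α) = t` (the inner max-min is continuous in `u`) and an
`n`-th root `v` of `u`. Each target point `w = v ζ_{mn}^J` satisfies `w^n = u ζ_m^J`, so some `α_k`
lies within `t` of `w^n`. Among the roots `β_{k,ℓ}` pick the one with `z = β_{k,ℓ} / w` of argument
at most `π/n`. Then `1 - z^n = (1 - z) ∑_{j<n} z^j`, and once the sum is rotated by half its total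
angle every term has real part at least `1 - t`, whence `(1 - t) n |β_{k,ℓ} - w| ≤ |α_k - w^n| ≤ t`.
So `D(β) ≤ t / ((1 - t) n) ≤ 2t/n`, because `t ≤ 1/2`.
-/

open Real

lemma continuous_iSup_of_finite {ι X L : Type*} [TopologicalSpace X]
    [ConditionallyCompleteLattice L] [TopologicalSpace L] [ContinuousSup L] [Finite ι]
    {f : ι → X → L} (hf : ∀ i, Continuous (f i)) : Continuous fun x => ⨆ i, f i x := by
  rcases isEmpty_or_nonempty ι with hι | hι
  · simp only [iSup_of_empty']
    exact continuous_const
  · cases nonempty_fintype ι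
    simp_rw [← Finset.sup'_univ_eq_ciSup]
    exact Continuous.finset_sup'_apply _ fun i _ => hf i

lemma continuous_iInf_of_finite {ι X L : Type*} [TopologicalSpace X]
    [ConditionallyCompleteLattice L] [TopologicalSpace L] [ContinuousInf L] [Finite ι]
    {f : ι → X → L} (hf : ∀ i, Continuous (f i)) : Continuous fun x => ⨅ i, f i x :=
  continuous_iSup_of_finite (L := Lᵒᵈ) hf

lemma one_sub_le_cos_half {c x : ℝ} (hc : 0 ≤ c) (hx : |x| ≤ π)
    (h : 1 - c ≤ (1 + c) * cos x) : 1 - c ≤ cos (x / 2) := by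
  have hx' := abs_le.mp hx
  have hnonneg : 0 ≤ cos (x / 2) := cos_nonneg_of_mem_Icc ⟨by linarith, by linarith⟩
  have hsq : cos (x / 2) ^ 2 = 1 / 2 + cos x / 2 := by
    rw [cos_sq, show 2 * (x / 2) = x by ring]
  -- `cos² (x/2) = (1 + cos x)/2 ≥ 1/(1 + c) ≥ (1 - c)²`
  nlinarith [mul_nonneg (mul_nonneg hc hc) hnonneg, mul_nonneg hc hnonneg]

lemma one_sub_le_pow_mul_cos {ρ c x a : ℝ} {k n : ℕ} (hρ : 0 ≤ ρ) (hkn : k ≤ n)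
    (hc₀ : 0 ≤ c) (hc₁ : c < 1) (hx : |x| ≤ π) (ha : |a| ≤ |x| / 2)
    (hre : 1 - c ≤ ρ ^ n * cos x) (hub : ρ ^ n ≤ 1 + c) :
    1 - c ≤ ρ ^ k * cos a := by
  have hcos_a : cos (|x| / 2) ≤ cos a := by
    rw [← cos_abs a]
    exact cos_le_cos_of_nonneg_of_le_pi (abs_nonneg a) (by linarith [abs_nonneg x]) ha
  rcases le_total ρ 1 with hρ1 | hρ1
  · have hcos_x : cos x ≤ cos a := by
      rw [← cos_abs a, ← cos_abs x]
      exact cos_le_cos_of_nonneg_of_le_pi (abs_nonneg a) hx (by linarith [abs_nonneg x])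
    have ha_nonneg : 0 ≤ cos a :=
      (cos_nonneg_of_mem_Icc ⟨by linarith [abs_nonneg x], by linarith⟩).trans hcos_a
    calc 1 - c ≤ ρ ^ n * cos x := hre
      _ ≤ ρ ^ n * cos a := by gcongr
      _ ≤ ρ ^ k * cos a := mul_le_mul_of_nonneg_right (pow_le_pow_of_le_one hρ hρ1 hkn) ha_nonneg
  · have hcos_pos : 0 < cos x := by nlinarith [pow_nonneg hρ n]
    have hhalf : 1 - c ≤ cos (|x| / 2) := by
      refine one_sub_le_cos_half hc₀ (by rwa [abs_abs]) ?_
      rw [cos_abs]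
      nlinarith
    calc 1 - c ≤ cos a := hhalf.trans hcos_a
      _ ≤ ρ ^ k * cos a := le_mul_of_one_le_left (by linarith) (one_le_pow₀ hρ1)

lemma abs_add_mul_le_half {n k : ℕ} (hk : k < n) (θ : ℝ) :
    |-((n - 1) * θ / 2) + k * θ| ≤ |n * θ| / 2 := by
  have hk' : (k : ℝ) + 1 ≤ n := by exact_mod_cast hk
  rw [show -((n - 1) * θ / 2) + k * θ = (2 * k - n + 1) * θ / 2 by ring, abs_div, abs_mul, abs_mul,
    abs_two, Nat.abs_cast]
  gcongr
  exact abs_le.mpr ⟨by linarith [(k.cast_nonneg : (0 : ℝ) ≤ k)], by linarith⟩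

lemma mul_norm_one_sub_le_norm_one_sub_pow {n : ℕ} {ρ θ c : ℝ} (hρ : 0 ≤ ρ) (hθ : n * |θ| ≤ π)
    (hc : c < 1) (h : ‖1 - ((ρ : ℂ) * Complex.exp (θ * Complex.I)) ^ n‖ ≤ c) :
    (1 - c) * n * ‖1 - (ρ : ℂ) * Complex.exp (θ * Complex.I)‖ ≤
      ‖1 - ((ρ : ℂ) * Complex.exp (θ * Complex.I)) ^ n‖ := by
  set z := (ρ : ℂ) * Complex.exp (θ * Complex.I)
  have hc₀ : 0 ≤ c := (norm_nonneg _).trans h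
  have hnθ : |n * θ| ≤ π := by rwa [abs_mul, Nat.abs_cast]
  have hz : ‖z‖ = ρ := by
    rw [norm_mul, Complex.norm_real, Complex.norm_exp_ofReal_mul_I, mul_one, norm_of_nonneg hρ]
  have hre_pow : ∀ (k : ℕ) (φ : ℝ),
      (Complex.exp (φ * Complex.I) * z ^ k).re = ρ ^ k * cos (φ + k * θ) := by
    intro k φ
    rw [mul_pow, ← Complex.exp_nat_mul, mul_left_comm, ← Complex.exp_add, ← Complex.ofReal_pow,
      show (φ : ℂ) * Complex.I + k * (θ * Complex.I) = ((φ + k * θ : ℝ) : ℂ) * Complex.I by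
        push_cast; ring,
      Complex.re_ofReal_mul, Complex.exp_ofReal_mul_I_re]
  have hre : 1 - c ≤ ρ ^ n * cos (n * θ) := by
    have hzn : (z ^ n).re = ρ ^ n * cos (n * θ) := by simpa using hre_pow n 0
    have := Complex.re_le_norm (1 - z ^ n)
    rw [Complex.sub_re, Complex.one_re, hzn] at this
    linarith
  have hub : ρ ^ n ≤ 1 + c := by
    have := norm_sub_norm_le (z ^ n) 1
    rw [norm_pow, hz, norm_one, norm_sub_rev] at this
    linarith
  -- Rotating by half the total angle puts every term of the geometric sum near the positive axis.
  have hsum : (1 - c) * n ≤ ‖∑ k ∈ Finset.range n, z ^ k‖ := by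
    set φ : ℝ := -((n - 1) * θ / 2)
    calc (1 - c) * n = ∑ _k ∈ Finset.range n, (1 - c) := by
          rw [Finset.sum_const, Finset.card_range, nsmul_eq_mul, mul_comm]
      _ ≤ ∑ k ∈ Finset.range n, (Complex.exp (φ * Complex.I) * z ^ k).re :=
          Finset.sum_le_sum fun k hk => by
            rw [hre_pow]
            exact one_sub_le_pow_mul_cos hρ (Finset.mem_range.mp hk).le hc₀ hc hnθ
              (abs_add_mul_le_half (Finset.mem_range.mp hk) θ) hre hub
      _ = (Complex.exp (φ * Complex.I) * ∑ k ∈ Finset.range n, z ^ k).re := by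
          rw [Finset.mul_sum, Complex.re_sum]
      _ ≤ ‖Complex.exp (φ * Complex.I) * ∑ k ∈ Finset.range n, z ^ k‖ := Complex.re_le_norm _
      _ = ‖∑ k ∈ Finset.range n, z ^ k‖ := by
          rw [norm_mul, Complex.norm_exp_ofReal_mul_I, one_mul]
  calc (1 - c) * n * ‖1 - z‖ ≤ ‖∑ k ∈ Finset.range n, z ^ k‖ * ‖1 - z‖ := by gcongr
    _ = ‖1 - z ^ n‖ := by
        rw [norm_sub_rev 1 z, norm_sub_rev 1, ← norm_mul, geom_sum_mul]

lemma norm_zetad (d : ℕ) : ‖zetad d‖ = 1 := by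
  simp [zetad, Complex.norm_exp]

lemma isPrimitiveRoot_zetad {d : ℕ} (hd : d ≠ 0) : IsPrimitiveRoot (zetad d) d :=
  Complex.isPrimitiveRoot_exp d hd

lemma zetad_mul_pow (m : ℕ) {n : ℕ} (hn : n ≠ 0) : zetad (m * n) ^ n = zetad m := by
  rw [zetad, zetad, ← Complex.exp_nat_mul]
  congr 1
  push_cast
  rcases eq_or_ne m 0 with rfl | hm
  · simp
  · field_simp

lemma exists_zetad_pow_succ_eq {d : ℕ} (hd : d ≠ 0) {ξ : ℂ} (hξ : ξ ^ d = 1) :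
    ∃ j : Fin d, zetad d ^ ((j : ℕ) + 1) = ξ := by
  have : NeZero d := ⟨hd⟩
  have hζ : zetad d ≠ 0 := by simp [zetad]
  obtain ⟨i, hi, hζi⟩ := (isPrimitiveRoot_zetad hd).eq_pow_of_pow_eq_one (ξ := ξ * (zetad d)⁻¹)
    (by rw [mul_pow, hξ, inv_pow, (isPrimitiveRoot_zetad hd).pow_eq_one, inv_one, one_mul])
  exact ⟨⟨i, hi⟩, by rw [pow_succ, hζi, inv_mul_cancel_right₀ hζ]⟩

lemma exists_mul_zetad_pow_eq_polar {n : ℕ} (hn : n ≠ 0) (x : ℂ) :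
    ∃ ℓ : Fin n, ∃ θ : ℝ, n * |θ| ≤ π ∧
      x * zetad n ^ ((ℓ : ℕ) + 1) = ‖x‖ * Complex.exp (θ * Complex.I) := by
  have hn' : (n : ℝ) ≠ 0 := Nat.cast_ne_zero.mpr hn
  -- `2πq/n` is the multiple of `2π/n` nearest to `arg x`.
  set q : ℤ := round (x.arg * n / (2 * π))
  obtain ⟨ℓ, hℓ⟩ := exists_zetad_pow_succ_eq hn
    (ξ := Complex.exp (↑(-(2 * π * q / n)) * Complex.I)) <| by
      rw [← Complex.exp_nat_mul, ← Complex.exp_int_mul_two_pi_mul_I (-q)]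
      congr 1
      push_cast
      field_simp
  refine ⟨ℓ, x.arg - 2 * π * q / n, ?_, ?_⟩
  · have hround := abs_sub_round (x.arg * n / (2 * π))
    rw [show x.arg - 2 * π * q / n = 2 * π / n * (x.arg * n / (2 * π) - q) by field_simp, abs_mul,
      abs_of_pos (by positivity), ← mul_assoc, mul_div_cancel₀ _ hn']
    nlinarith [pi_pos]
  · conv_lhs => rw [hℓ, ← Complex.norm_mul_exp_arg_mul_I x, mul_assoc, ← Complex.exp_add]
    push_cast
    ring_nf

lemma exists_mul_norm_root_mul_zetad_sub_le {n : ℕ} (hn : n ≠ 0) {w a r : ℂ} {c : ℝ}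
    (hw : ‖w‖ = 1) (hr : r ^ n = a) (hc : c < 1) (ha : ‖a - w ^ n‖ ≤ c) :
    ∃ ℓ : Fin n, (1 - c) * n * ‖r * zetad n ^ ((ℓ : ℕ) + 1) - w‖ ≤ ‖a - w ^ n‖ := by
  have norm_one_sub_div : ∀ {v : ℂ}, ‖v‖ = 1 → ∀ y : ℂ, ‖1 - y / v‖ = ‖y - v‖ := fun hv y => by
    rw [one_sub_div (norm_ne_zero_iff.mp (hv ▸ one_ne_zero)), norm_div, hv, div_one, norm_sub_rev]
  have hwn : ‖w ^ n‖ = 1 := by rw [norm_pow, hw, one_pow]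
  obtain ⟨ℓ, θ, hθ, hpolar⟩ := exists_mul_zetad_pow_eq_polar hn (r / w)
  rw [norm_div, hw, div_one] at hpolar
  have hzn : (r / w * zetad n ^ ((ℓ : ℕ) + 1)) ^ n = a / w ^ n := by
    rw [mul_pow, div_pow, hr, ← pow_mul, mul_comm _ n, pow_mul,
      (isPrimitiveRoot_zetad hn).pow_eq_one, one_pow, mul_one]
  have hbound := mul_norm_one_sub_le_norm_one_sub_pow (norm_nonneg r) hθ hc
    (by rwa [← hpolar, hzn, norm_one_sub_div hwn])
  rw [← hpolar, hzn, norm_one_sub_div hwn, div_mul_eq_mul_div, norm_one_sub_div hw] at hbound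
  exact ⟨ℓ, hbound⟩

noncomputable def discAt {d : ℕ} (ξ : Fin d → ℂ) (u : ℂ) : ℝ :=
  ⨆ j : Fin d, ⨅ i : Fin d, ‖ξ i - u * zetad d ^ ((j : ℕ) + 1)‖

section discAt

variable {d : ℕ} (ξ : Fin d → ℂ)

lemma discAt_nonneg (u : ℂ) : 0 ≤ discAt ξ u :=
  Real.iSup_nonneg fun _ => Real.iInf_nonneg fun _ => norm_nonneg _

lemma disc_le_discAt {u : ℂ} (hu : ‖u‖ = 1) : Disc ξ ≤ discAt ξ u :=
  csInf_le ⟨0, by rintro _ ⟨v, -, rfl⟩; exact discAt_nonneg ξ v⟩ ⟨u, hu, rfl⟩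

lemma continuous_discAt : Continuous (discAt ξ) :=
  continuous_iSup_of_finite fun _ => continuous_iInf_of_finite fun _ => by fun_prop

lemma exists_disc_eq_discAt : ∃ u : ℂ, ‖u‖ = 1 ∧ Disc ξ = discAt ξ u := by
  obtain ⟨u, hu, hmin⟩ := (isCompact_sphere (0 : ℂ) 1).exists_isMinOn
    ⟨1, by simp⟩ (continuous_discAt ξ).continuousOn
  rw [mem_sphere_zero_iff_norm] at hu
  refine ⟨u, hu, IsLeast.csInf_eq ⟨⟨u, hu, rfl⟩, ?_⟩⟩
  rintro _ ⟨v, hv, rfl⟩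
  exact hmin (mem_sphere_zero_iff_norm.mpr hv)

lemma exists_norm_sub_le_discAt (hd : d ≠ 0) (u : ℂ) (k : ℕ) :
    ∃ i, ‖ξ i - u * zetad d ^ k‖ ≤ discAt ξ u := by
  have : Nonempty (Fin d) := ⟨⟨0, Nat.pos_of_ne_zero hd⟩⟩
  obtain ⟨j, hj⟩ := exists_zetad_pow_succ_eq hd (ξ := zetad d ^ k)
    (by rw [← pow_mul, mul_comm, pow_mul, (isPrimitiveRoot_zetad hd).pow_eq_one, one_pow])
  obtain ⟨i, hi⟩ := Finite.exists_min fun i => ‖ξ i - u * zetad d ^ k‖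
  refine ⟨i, (le_ciInf hi).trans ?_⟩
  rw [← hj]
  exact le_ciSup (f := fun j : Fin d => ⨅ i, ‖ξ i - u * zetad d ^ ((j : ℕ) + 1)‖)
    (Finite.bddAbove_range _) j

end discAt

noncomputable def rootTuple {m : ℕ} (r : Fin m → ℂ) (n : ℕ) : Fin (m * n) → ℂ := fun i =>
  r (finProdFinEquiv.symm i).1 * zetad n ^ (((finProdFinEquiv.symm i).2 : ℕ) + 1)

lemma discAt_rootTuple_le {m n : ℕ} (α r : Fin m → ℂ) (hr : ∀ k, r k ^ n = α k) {v : ℂ}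
    (hv : ‖v‖ = 1) (hα : discAt α (v ^ n) < 1) :
    discAt (rootTuple r n) v ≤ discAt α (v ^ n) / ((1 - discAt α (v ^ n)) * n) := by
  set t := discAt α (v ^ n)
  refine Real.iSup_le (fun J => ?_) (div_nonneg (discAt_nonneg α _) (by positivity))
  have hm : m ≠ 0 := left_ne_zero_of_mul (Fin.pos J).ne'
  have hn : n ≠ 0 := right_ne_zero_of_mul (Fin.pos J).ne'
  set w := v * zetad (m * n) ^ ((J : ℕ) + 1)
  have hw : ‖w‖ = 1 := by rw [norm_mul, hv, norm_pow, norm_zetad, one_pow, one_mul]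
  have hwn : w ^ n = v ^ n * zetad m ^ ((J : ℕ) + 1) := by
    rw [mul_pow, ← pow_mul, mul_comm ((J : ℕ) + 1) n, pow_mul, zetad_mul_pow m hn]
  obtain ⟨i, hi⟩ := exists_norm_sub_le_discAt α hm (v ^ n) ((J : ℕ) + 1)
  rw [← hwn] at hi
  obtain ⟨ℓ, hℓ⟩ := exists_mul_norm_root_mul_zetad_sub_le hn hw (hr i) hα hi
  have hroot : rootTuple r n (finProdFinEquiv (i, ℓ)) = r i * zetad n ^ ((ℓ : ℕ) + 1) := by
    simp only [rootTuple, Equiv.symm_apply_apply]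
  rw [le_div_iff₀ (by have := Nat.pos_of_ne_zero hn; positivity), mul_comm]
  calc (1 - t) * n * ⨅ I, ‖rootTuple r n I - w‖
      ≤ (1 - t) * n * ‖r i * zetad n ^ ((ℓ : ℕ) + 1) - w‖ := by
        rw [← hroot]
        gcongr
        exact ciInf_le (Finite.bddBelow_range _) _
    _ ≤ t := hℓ.trans hi

theorem stmt6_general (m n : ℕ) (hn : 0 < n) (α : Fin m → ℂ)
    (hD : Disc α ≤ 1 / 2) (r : Fin m → ℂ) (hr : ∀ k, r k ^ n = α k) :
    Disc (fun i : Fin (m * n) =>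
        r (finProdFinEquiv.symm i).1 * zetad n ^ (((finProdFinEquiv.symm i).2 : ℕ) + 1)) ≤
      2 / (n : ℝ) * Disc α := by
  obtain ⟨u, hu, hαu⟩ := exists_disc_eq_discAt α
  obtain ⟨v, hvu⟩ := IsAlgClosed.exists_pow_nat_eq u hn
  have hv : ‖v‖ = 1 :=
    (pow_eq_one_iff_of_nonneg (norm_nonneg v) hn.ne').mp (by rw [← norm_pow, hvu, hu])
  have hD₀ : 0 ≤ Disc α := hαu ▸ discAt_nonneg α u
  have hn' : (0 : ℝ) < n := Nat.cast_pos.mpr hn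
  calc Disc (rootTuple r n) ≤ discAt (rootTuple r n) v := disc_le_discAt _ hv
    _ ≤ Disc α / ((1 - Disc α) * n) := by
        rw [hαu, ← hvu]
        exact discAt_rootTuple_le α r hr hv (by rw [hvu, ← hαu]; linarith)
    _ ≤ 2 / n * Disc α := by
        rw [div_le_iff₀ (by nlinarith)]
        field_simp
        nlinarith

/-- If `D(α) ≤ 1/2` then the `mn`-tuple of points
`α_k^{1/n} ζ_n^ℓ` (for any fixed choice `r k` of `n`-th roots of `α k`)
has discrepancy at most `(2/n) D(α)`. -/
theorem stmt6 (m n : ℕ) (hm : 0 < m) (hn : 0 < n) (α : Fin m → ℂ)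
    (hD : Disc α ≤ 1 / 2) (r : Fin m → ℂ) (hr : ∀ k, r k ^ n = α k) :
    Disc (fun i : Fin (m * n) =>
        r (finProdFinEquiv.symm i).1 * zetad n ^ (((finProdFinEquiv.symm i).2 : ℕ) + 1)) ≤
      2 / (n : ℝ) * Disc α :=
  stmt6_general m n hn α hD r hr
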